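/- arXiv:1512.01526 — 2 statements merged into one kernel-verified Lean document; each statement's English description precedes it below -/
import Mathlib

section
/- For every τ ∈ [2/3, 1], setting α = 5τ/(2(2−τ)), one has P(α, τ) := (2−τ)²α⁴ − 8(2−τ)α² + 4(4−3τ)α − 4(1−τ) < 0; consequently, for such τ the largest root α* of P(·, τ) satisfies α* > 5τ/(2(2−τ)), and hence 4α*(2/τ − 1) + 2 > 12. -/
open MeasureTheory Filter Topology Real Set

noncomputable section

/-- The Laplacian of a real-valued function on Euclidean space. -/
def lap {n : ℕ} (u : EuclideanSpace ℝ (Fin n) → ℝ) (x : EuclideanSpace ℝ (Fin n)) : ℝ :=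
  ∑ i : Fin n, iteratedFDeriv ℝ 2 u x ![EuclideanSpace.single i (1:ℝ), EuclideanSpace.single i (1:ℝ)]

/-- A bounded (smooth) domain. -/
def GoodDomain {n : ℕ} (Ω : Set (EuclideanSpace ℝ (Fin n))) : Prop :=
  IsOpen Ω ∧ Bornology.IsBounded Ω ∧ Ω.Nonempty

/-- The domain `[0, a_f)` of the nonlinearity. -/
def domf (a : EReal) : Set ℝ := {t : ℝ | 0 ≤ t ∧ (t : EReal) < a}

/-- The filter of `t → a_f⁻`. -/
def afFilter (a : EReal) : Filter ℝ :=
  if a = ⊤ then Filter.atTop else nhdsWithin a.toReal (Set.Iio a.toReal)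

/-- Hypothesis (H) on the nonlinearity `f : [0, a_f) → ℝ₊`. -/
structure HypH (a : EReal) (f : ℝ → ℝ) : Prop where
  a_pos : 0 < a
  smooth : ContDiffOn ℝ (⊤ : ℕ∞) f (domf a)
  mono : StrictMonoOn f (domf a)
  convex : ConvexOn ℝ (domf a) f
  f0_pos : 0 < f 0
  pos : ∀ t ∈ domf a, 0 < f t
  blowup : Filter.Tendsto f (afFilter a) Filter.atTop
  superlinear : a = ⊤ → Filter.Tendsto (fun t => f t / t) Filter.atTop Filter.atTop

/-- `τ₋ = liminf_{t → a_f} f f'' / (f')²`. -/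
def tauMinus (a : EReal) (f : ℝ → ℝ) : ℝ :=
  Filter.liminf (fun t => f t * deriv (deriv f) t / (deriv f t) ^ 2) (afFilter a)

/-- `τ₊ = limsup_{t → a_f} f f'' / (f')²`. -/
def tauPlus (a : EReal) (f : ℝ → ℝ) : ℝ :=
  Filter.limsup (fun t => f t * deriv (deriv f) t / (deriv f t) ^ 2) (afFilter a)

/-- `u` is a (smooth, `[0,a_f)`-valued) solution of `Δ²u = λ f(u)` in `Ω`,
`u = Δu = 0` on `∂Ω`. -/
def Solves {n : ℕ} (Ω : Set (EuclideanSpace ℝ (Fin n))) (a : EReal) (lam : ℝ)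
    (f : ℝ → ℝ) (u : EuclideanSpace ℝ (Fin n) → ℝ) : Prop :=
  ContDiff ℝ (⊤ : ℕ∞) u ∧ (∀ x ∈ Ω, 0 ≤ u x ∧ (u x : EReal) < a) ∧
  (∀ x ∈ Ω, lap (lap u) x = lam * f (u x)) ∧
  (∀ x ∈ frontier Ω, u x = 0) ∧ (∀ x ∈ frontier Ω, lap u x = 0)

/-- `u` is a semistable solution: the second variation is nonnegative over
test functions in `H² ∩ H¹₀` (modelled by smooth functions vanishing on `∂Ω`). -/
def Semistable {n : ℕ} (Ω : Set (EuclideanSpace ℝ (Fin n))) (lam : ℝ)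
    (f : ℝ → ℝ) (u : EuclideanSpace ℝ (Fin n) → ℝ) : Prop :=
  ∀ φ : EuclideanSpace ℝ (Fin n) → ℝ, ContDiff ℝ (⊤ : ℕ∞) φ → (∀ x ∈ frontier Ω, φ x = 0) →
    0 ≤ ∫ x in Ω, ((lap φ x) ^ 2 - lam * deriv f (u x) * (φ x) ^ 2)

/-- `u` satisfies the stability inequality
`√λ ∫ √(f'(u)) φ² ≤ ∫ |∇φ|²` for all `φ ∈ H¹₀(Ω)`
(modelled by smooth compactly supported test functions). -/
def StabIneq {n : ℕ} (Ω : Set (EuclideanSpace ℝ (Fin n))) (lam : ℝ)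
    (f : ℝ → ℝ) (u : EuclideanSpace ℝ (Fin n) → ℝ) : Prop :=
  ∀ φ : EuclideanSpace ℝ (Fin n) → ℝ, ContDiff ℝ (⊤ : ℕ∞) φ → HasCompactSupport φ →
    tsupport φ ⊆ Ω →
    Real.sqrt lam * ∫ x in Ω, Real.sqrt (deriv f (u x)) * (φ x) ^ 2 ≤
      ∫ x in Ω, ‖gradient φ x‖ ^ 2

/-- The quartic polynomial `P_f(α, τ₋, τ₊)`. -/
def Pf (τm τp α : ℝ) : ℝ :=
  (2 - τm) ^ 2 * α ^ 4 - 8 * (2 - τp) * α ^ 2 + 4 * (4 - 3 * τp) * α - 4 * (1 - τp)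

/-- `F(t) = ∫₀ᵗ f(s) ds`. -/
def Fint (f : ℝ → ℝ) (t : ℝ) : ℝ := ∫ s in (0:ℝ)..t, f s

/-- `f̃(t) = f(t) - f(0)`. -/
def ftil (f : ℝ → ℝ) (t : ℝ) : ℝ := f t - f 0

/-- `Θ(t) = ∫₀ᵗ θ'(s)² ds`. -/
def Theta (θ : ℝ → ℝ) (t : ℝ) : ℝ := ∫ s in (0:ℝ)..t, (deriv θ s) ^ 2

/-- For every `τ ∈ [2/3, 1]` and `α = 5τ/(2(2−τ))` one has `P(α, τ) < 0`; consequently the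
largest root `α*` of `P(·, τ)` satisfies `α* > 5τ/(2(2−τ))` and `4α*(2/τ − 1) + 2 > 12`. -/
theorem statement18 (τ : ℝ) (hτ : τ ∈ Icc (2 / 3 : ℝ) 1) :
    Pf τ τ (5 * τ / (2 * (2 - τ))) < 0 ∧
    ∀ αstar : ℝ, Pf τ τ αstar = 0 → (∀ β : ℝ, Pf τ τ β = 0 → β ≤ αstar) →
      5 * τ / (2 * (2 - τ)) < αstar ∧ 12 < 4 * αstar * (2 / τ - 1) + 2 := by
  obtain ⟨hτl, hτu⟩ := hτ
  have hτ0 : 0 < τ := by linarith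
  have hd : 0 < 2 - τ := by linarith
  set α0 : ℝ := 5 * τ / (2 * (2 - τ)) with hα0
  have hα0le : α0 ≤ 5 / 2 := by
    rw [hα0, div_le_iff₀ (by linarith)]
    nlinarith
  have hrel : α0 * (2 * (2 - τ)) = 5 * τ := by
    rw [hα0]; field_simp
  have hneg : Pf τ τ α0 < 0 := by
    have heq : Pf τ τ α0 =
        (625 * τ^4 * (2 - τ)^2 - 800 * τ^2 * (2 - τ)^3 + 160 * τ * (4 - 3*τ) * (2 - τ)^3
          - 64 * (1 - τ) * (2 - τ)^4) / (16 * (2 - τ)^4) := by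
      unfold Pf; rw [hα0]; field_simp; ring
    rw [heq]
    apply div_neg_of_neg_of_pos _ (by positivity)
    nlinarith [sq_nonneg (τ - 2/3), sq_nonneg (τ - 1), sq_nonneg (τ - 4/5),
      mul_nonneg (sub_nonneg.2 hτl) (sub_nonneg.2 hτu),
      mul_nonneg (mul_nonneg (sub_nonneg.2 hτl) (sub_nonneg.2 hτu)) hτ0.le,
      sq_nonneg ((τ - 2/3) * (1 - τ)), mul_pos hτ0 hd, sq_nonneg τ,
      mul_nonneg (mul_nonneg (sub_nonneg.2 hτl) (sub_nonneg.2 hτu)) (sq_nonneg τ)]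
  refine ⟨hneg, fun αstar hroot hmax => ?_⟩
  -- P is positive at 10
  have h10 : 0 < Pf τ τ 10 := by unfold Pf; nlinarith
  have hcont : ContinuousOn (Pf τ τ) (Icc α0 10) := by
    unfold Pf; fun_prop
  have hmem : (0:ℝ) ∈ Icc (Pf τ τ α0) (Pf τ τ 10) := ⟨le_of_lt hneg, le_of_lt h10⟩
  obtain ⟨c, hc, hcz⟩ := intermediate_value_Icc (by linarith : α0 ≤ 10) hcont hmem
  have hcne : c ≠ α0 := fun h => by rw [h] at hcz; rw [hcz] at hneg; exact lt_irrefl 0 hneg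
  have hlt : α0 < αstar := lt_of_lt_of_le (lt_of_le_of_ne hc.1 (Ne.symm hcne)) (hmax c hcz)
  refine ⟨hlt, ?_⟩
  have key : 5 / 2 < αstar * (2 - τ) / τ := by
    rw [lt_div_iff₀ hτ0]
    have : 5 * τ / (2 * (2 - τ)) < αstar := hlt
    rw [div_lt_iff₀ (by positivity)] at this
    nlinarith
  have : 2 / τ - 1 = (2 - τ) / τ := by field_simp
  rw [this]
  have h4 : 4 * αstar * ((2 - τ) / τ) = 4 * (αstar * (2 - τ) / τ) := by ring
  rw [h4]; linarith

end
end

section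
/- For every τ ∈ [1, 1.57863], setting α = 5τ/(4(2−τ)), one has P(α, τ) := (2−τ)²α⁴ − 8(2−τ)α² + 4(4−3τ)α − 4(1−τ) < 0; consequently, for such τ the largest root α* of P(·, τ) satisfies α* > 5τ/(4(2−τ)), and hence 4α*(2/τ − 1) + 2 > 7. -/
open MeasureTheory Filter Topology Real Set

noncomputable section

/-- For every `τ ∈ [1, 1.57863]` and `α = 5τ/(4(2−τ))` one has `P(α, τ) < 0`; consequently
the largest root `α*` of `P(·, τ)` satisfies `α* > 5τ/(4(2−τ))` and `4α*(2/τ − 1) + 2 > 7`. -/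
theorem statement19 (τ : ℝ) (hτ : τ ∈ Icc (1 : ℝ) 1.57863) :
    Pf τ τ (5 * τ / (4 * (2 - τ))) < 0 ∧
    ∀ αstar : ℝ, Pf τ τ αstar = 0 → (∀ β : ℝ, Pf τ τ β = 0 → β ≤ αstar) →
      5 * τ / (4 * (2 - τ)) < αstar ∧ 7 < 4 * αstar * (2 / τ - 1) + 2 := by

  obtain ⟨h1, h2⟩ := hτ
  have hτpos : (0:ℝ) < τ := by linarith
  have hc : (0:ℝ) < 2 - τ := by norm_num at h2 ⊢; linarith
  have h2' : τ ≤ 1.57863 := h2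
  have hQ : 625*τ^4+8064*τ^3-24320*τ^2+18432*τ-4096 < 0 := by
    nlinarith [mul_nonneg (sub_nonneg.2 h1) (sub_nonneg.2 h2'), sq_nonneg (τ-1),
      sq_nonneg (τ-1.57863), sq_nonneg (τ-1.3), mul_nonneg (mul_nonneg (sub_nonneg.2 h1) (sub_nonneg.2 h2')) (sub_nonneg.2 h1),
      mul_nonneg (mul_nonneg (sub_nonneg.2 h1) (sub_nonneg.2 h2')) (sub_nonneg.2 h2')]
  have key : Pf τ τ (5 * τ / (4 * (2 - τ))) =
      (625*τ^4+8064*τ^3-24320*τ^2+18432*τ-4096) / (256*(2-τ)^2) := by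
    unfold Pf
    field_simp
    ring
  have hPneg : Pf τ τ (5 * τ / (4 * (2 - τ))) < 0 := by
    rw [key]
    exact div_neg_of_neg_of_pos hQ (by positivity)
  refine ⟨hPneg, fun αstar hroot hmax => ?_⟩
  have hcont : Continuous fun β => Pf τ τ β := by
    unfold Pf; continuity
  set α0 := 5 * τ / (4 * (2 - τ)) with hα0
  have hα0le : α0 ≤ 10 := by
    rw [hα0, div_le_iff₀ (by positivity)]
    nlinarith
  have hP10 : 0 < Pf τ τ 10 := by
    unfold Pf; nlinarith
  have hlt : α0 < αstar := by
    by_contra hcon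
    push_neg at hcon
    have hsub := intermediate_value_Icc hα0le (hcont.continuousOn)
    have hmem : (0:ℝ) ∈ Icc (Pf τ τ α0) (Pf τ τ 10) := ⟨hPneg.le, hP10.le⟩
    obtain ⟨β, hβmem, hβ0⟩ := hsub hmem
    have hβle := hmax β hβ0
    have : β = α0 := le_antisymm (le_trans hβle hcon) hβmem.1
    rw [this] at hβ0
    exact absurd hβ0 (ne_of_lt hPneg)
  refine ⟨hlt, ?_⟩
  have h5 : 5*τ < αstar * (4*(2-τ)) := by
    rw [hα0, div_lt_iff₀ (by positivity)] at hlt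
    exact hlt
  have hd : 4*αstar*(2/τ-1)+2 = 4*αstar*(2-τ)/τ + 2 := by
    field_simp
  rw [hd]
  have : 5 < 4*αstar*(2-τ)/τ := by
    rw [lt_div_iff₀ hτpos]; nlinarith
  linarith


end
end
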